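/- arXiv:1612.09496 — 3 statements merged into one kernel-verified Lean document; each statement's English description precedes it below -/
import Mathlib

section
/- Let T > 0, ε > 0, let E, B : [0,T] → [0,∞) be nondecreasing, and let r be a rate function. Suppose p : [0,T] → [0,∞) is a piecewise continuous function satisfying, for every t ∈ [0,T], p(t) = min{ r⁻¹( (B(t) − ∫₀ᵗ r(p(s)) ds) / (T − t + ε) ), (E(t) − ∫₀ᵗ p(s) ds) / (T − t + ε) } (the online source transmission policy; note that the remaining-data and remaining-energy quantities B(t) − ∫₀ᵗ r(p) and E(t) − ∫₀ᵗ p stay nonnegative under this policy). Then p is nondecreasing on [0,T]. -/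
open MeasureTheory Set Filter intervalIntegral

noncomputable section

/-- Key Grönwall-type lemma: if `F` decreases at most at rate `g` (in integral form,
allowing upward jumps), and `g s ≤ F s / (T - s + ε)` pointwise, then the ratio
`F t / (T - t + ε)` is nondecreasing from `a` to `b`. -/
private lemma gronwall_ratio (T ε a b : ℝ) (hε : 0 < ε) (hab : a ≤ b) (hbT : b ≤ T)
    (F g : ℝ → ℝ)
    (hg_int : IntervalIntegrable g volume a b)
    (hF_int : IntervalIntegrable F volume a b)
    (hF_ineq : ∀ u v, a ≤ u → u ≤ v → v ≤ b → F u - ∫ s in u..v, g s ≤ F v)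
    (hg_le : ∀ s ∈ Set.Icc a b, g s ≤ F s / (T - s + ε)) :
    F a / (T - a + ε) ≤ F b / (T - b + ε) := by
  have hd : ∀ s ∈ Set.Icc a b, 0 < T - s + ε := fun s hs => by
    have := hs.2; linarith
  have hda : 0 < T - a + ε := hd a ⟨le_rfl, hab⟩
  have hdb : 0 < T - b + ε := hd b ⟨hab, le_rfl⟩
  set H : ℝ → ℝ := fun s => F s * (T - a + ε) - F a * (T - s + ε) with hH_def
  set w : ℝ → ℝ := fun s => H s / (T - s + ε) with hw_def
  have huIcc : Set.uIcc a b = Set.Icc a b := Set.uIcc_of_le hab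
  -- integrability
  have hH_int : IntervalIntegrable H volume a b := by
    apply IntervalIntegrable.sub (hF_int.mul_const _)
    apply ContinuousOn.intervalIntegrable
    exact continuousOn_const.mul ((continuousOn_const.sub continuousOn_id).add
      continuousOn_const)
  have hw_int : IntervalIntegrable w volume a b := by
    have hc : ContinuousOn (fun s => (T - s + ε)⁻¹) (Set.uIcc a b) := by
      apply ContinuousOn.inv₀
      · exact (continuousOn_const.sub continuousOn_id).add continuousOn_const
      · intro x hx
        exact ne_of_gt (hd x (huIcc ▸ hx))
    simpa [hw_def, div_eq_mul_inv] using hH_int.mul_continuousOn hc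
  have hsub : ∀ u v, a ≤ u → u ≤ v → v ≤ b → Set.uIcc u v ⊆ Set.uIcc a b :=
    fun u v h1 h2 h3 =>
      Set.uIcc_subset_uIcc (huIcc ▸ ⟨h1, h2.trans h3⟩) (huIcc ▸ ⟨h1.trans h2, h3⟩)
  -- the primitive of w
  set I : ℝ → ℝ := fun t => ∫ s in a..t, w s with hI_def
  have hI_cont : ContinuousOn I (Set.Icc a b) := by
    rw [← huIcc]
    exact intervalIntegral.continuousOn_primitive_interval' hw_int Set.left_mem_uIcc
  set L : ℝ → ℝ := fun t => H t + I t with hL_def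
  have hIdiff : ∀ u v, a ≤ u → u ≤ v → v ≤ b → I v - I u = ∫ s in u..v, w s := by
    intro u v h1 h2 h3
    have := intervalIntegral.integral_add_adjacent_intervals
      (hw_int.mono_set (hsub a u le_rfl h1 (h2.trans h3)))
      (hw_int.mono_set (hsub u v h1 h2 h3))
    simp only [hI_def]
    linarith [this]
  -- L is monotone
  have hL_mono : ∀ u v, a ≤ u → u ≤ v → v ≤ b → L u ≤ L v := by
    intro u v h1 h2 h3
    have hptwise : ∀ s ∈ Set.Icc u v, (T - a + ε) * g s - F a ≤ w s := by
      intro s hs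
      have hs' : s ∈ Set.Icc a b := ⟨h1.trans hs.1, hs.2.trans h3⟩
      have hds : 0 < T - s + ε := hd s hs'
      have h4 : g s * (T - s + ε) ≤ F s := by
        have := hg_le s hs'
        calc g s * (T - s + ε) ≤ (F s / (T - s + ε)) * (T - s + ε) := by
              exact mul_le_mul_of_nonneg_right this hds.le
          _ = F s := by field_simp
      rw [hw_def, le_div_iff₀ hds]
      have h5 : (T - a + ε) * (g s * (T - s + ε)) ≤ (T - a + ε) * F s :=
        mul_le_mul_of_nonneg_left h4 hda.le
      simp only [hH_def]
      nlinarith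
    have hint1 : IntervalIntegrable (fun s => (T - a + ε) * g s - F a) volume u v :=
      ((hg_int.mono_set (hsub u v h1 h2 h3)).const_mul _).sub intervalIntegrable_const
    have hint2 : IntervalIntegrable w volume u v := hw_int.mono_set (hsub u v h1 h2 h3)
    have hmono := intervalIntegral.integral_mono_on h2 hint1 hint2 hptwise
    have hval : (∫ s in u..v, ((T - a + ε) * g s - F a))
        = (T - a + ε) * (∫ s in u..v, g s) - F a * (v - u) := by
      rw [intervalIntegral.integral_sub ((hg_int.mono_set (hsub u v h1 h2 h3)).const_mul _)
        intervalIntegrable_const, intervalIntegral.integral_const_mul,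
        intervalIntegral.integral_const, smul_eq_mul]
      ring
    have hF := hF_ineq u v h1 h2 h3
    have hHdiff : H v - H u = (F v - F u) * (T - a + ε) + F a * (v - u) := by
      simp only [hH_def]; ring
    have hId := hIdiff u v h1 h2 h3
    rw [hval] at hmono
    have hkey : 0 ≤ (F v - F u + ∫ s in u..v, g s) * (T - a + ε) :=
      mul_nonneg (by linarith) hda.le
    simp only [hL_def]
    nlinarith [hkey, hHdiff, hId, hmono]
  -- main claim: H ≥ 0 on [a,b]
  have hH_nonneg : ∀ t ∈ Set.Icc a b, 0 ≤ H t := by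
    by_contra hcon
    push_neg at hcon
    obtain ⟨τ, hτm, hτneg⟩ := hcon
    have hIa : I a = 0 := intervalIntegral.integral_same
    have hHa : H a = 0 := by simp [hH_def]
    have hLa : L a = 0 := by simp [hL_def, hIa, hHa]
    set c : ℝ := L τ with hc_def
    have hc0 : 0 ≤ c := by
      have := hL_mono a τ le_rfl hτm.1 hτm.2
      linarith [hLa]
    have hcI : c < I τ := by
      have hLτ : c = H τ + I τ := by simp [hc_def, hL_def]
      linarith [hτneg]
    set S : Set ℝ := Set.Icc a τ ∩ I ⁻¹' (Set.Iic c) with hS_def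
    have hS_closed : IsClosed S := by
      apply (hI_cont.mono (Set.Icc_subset_Icc le_rfl hτm.2)).preimage_isClosed_of_isClosed
        isClosed_Icc isClosed_Iic
    have hS_sub : S ⊆ Set.Icc a τ := Set.inter_subset_left
    have hS_cpt : IsCompact S := isCompact_Icc.of_isClosed_subset hS_closed hS_sub
    have haS : a ∈ S := ⟨⟨le_rfl, hτm.1⟩, by simp [hIa, hc0]⟩
    set σ : ℝ := sSup S with hσ_def
    have hσS : σ ∈ S := hS_cpt.sSup_mem ⟨a, haS⟩
    have hσa : a ≤ σ := (hS_sub hσS).1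
    have hστ : σ ≤ τ := (hS_sub hσS).2
    have hσI : I σ ≤ c := hσS.2
    have hσlt : σ < τ := by
      rcases lt_or_eq_of_le hστ with h | h
      · exact h
      · exfalso; rw [h] at hσI; linarith
    have hw_neg : ∀ s ∈ Set.Ioc σ τ, w s ≤ 0 := by
      intro s hs
      have hsab : s ∈ Set.Icc a b := ⟨hσa.trans hs.1.le, hs.2.trans hτm.2⟩
      have hLs : L s ≤ c := hL_mono s τ hsab.1 hs.2 hτm.2
      have hIs : c < I s := by
        by_contra h
        push_neg at h
        have : s ∈ S := ⟨⟨hsab.1, hs.2⟩, h⟩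
        have := le_csSup hS_cpt.bddAbove this
        linarith [hs.1]
      have hHs : H s ≤ 0 := by simp only [hL_def] at hLs; linarith
      exact div_nonpos_of_nonpos_of_nonneg hHs (hd s hsab).le
    have hint_neg : (∫ s in σ..τ, w s) ≤ 0 := by
      rw [intervalIntegral.integral_of_le hσlt.le]
      exact setIntegral_nonpos measurableSet_Ioc hw_neg
    have := hIdiff σ τ hσa hσlt.le hτm.2
    linarith
  -- conclude
  have := hH_nonneg b ⟨hab, le_rfl⟩
  rw [div_le_div_iff₀ hda hdb]
  simp only [hH_def] at this
  linarith

/-- A rate function: continuous, strictly increasing, concave on `[0,∞)`,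
vanishing at `0` and tending to `∞`. -/
def IsRateFunction (r : ℝ → ℝ) : Prop :=
  ContinuousOn r (Set.Ici 0) ∧ StrictMonoOn r (Set.Ici 0) ∧
    ConcaveOn ℝ (Set.Ici 0) r ∧ r 0 = 0 ∧
    Filter.Tendsto r Filter.atTop Filter.atTop

/-- `φ` is the inverse of the rate function `r` on `[0,∞)`. -/
def IsInverseOn (φ r : ℝ → ℝ) : Prop :=
  (∀ p : ℝ, 0 ≤ p → φ (r p) = p) ∧ (∀ y : ℝ, 0 ≤ y → r (φ y) = y) ∧
    (∀ y : ℝ, 0 ≤ y → 0 ≤ φ y)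

/-- `f` is piecewise continuous on `[a,b]`: continuous off a finite set. -/
def PiecewiseContOn (a b : ℝ) (f : ℝ → ℝ) : Prop :=
  ∃ s : Finset ℝ, ContinuousOn f (Set.Icc a b \ (s : Set ℝ))

/-- Source part of Lemma 4.1: the online source transmitted power curve is
nondecreasing. -/
theorem online_source_power_monotone
    (T ε : ℝ) (hT : 0 < T) (hε : 0 < ε)
    (E B : ℝ → ℝ)
    (hE_nonneg : ∀ t ∈ Set.Icc (0:ℝ) T, 0 ≤ E t) (hE_mono : MonotoneOn E (Set.Icc 0 T))
    (hB_nonneg : ∀ t ∈ Set.Icc (0:ℝ) T, 0 ≤ B t) (hB_mono : MonotoneOn B (Set.Icc 0 T))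
    (r φ : ℝ → ℝ) (hr : IsRateFunction r) (hφ : IsInverseOn φ r)
    (p : ℝ → ℝ)
    (hp_pc : PiecewiseContOn 0 T p)
    (hp_nonneg : ∀ t ∈ Set.Icc (0:ℝ) T, 0 ≤ p t)
    (hp_int : IntervalIntegrable p MeasureTheory.volume 0 T)
    (hrp_int : IntervalIntegrable (fun s => r (p s)) MeasureTheory.volume 0 T)
    -- the remaining-data and remaining-energy quantities stay nonnegative
    (h_data_nonneg : ∀ t ∈ Set.Icc (0:ℝ) T, 0 ≤ B t - ∫ s in (0:ℝ)..t, r (p s))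
    (h_energy_nonneg : ∀ t ∈ Set.Icc (0:ℝ) T, 0 ≤ E t - ∫ s in (0:ℝ)..t, p s)
    -- the online source transmission policy
    (h_policy : ∀ t ∈ Set.Icc (0:ℝ) T,
      p t = min (φ ((B t - ∫ s in (0:ℝ)..t, r (p s)) / (T - t + ε)))
                ((E t - ∫ s in (0:ℝ)..t, p s) / (T - t + ε))) :
    MonotoneOn p (Set.Icc 0 T) := by
  have hd : ∀ t ∈ Set.Icc (0:ℝ) T, 0 < T - t + ε := fun t ht => by
    have := ht.2; linarith
  -- φ is monotone on nonnegatives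
  have hφ_mono : ∀ x y : ℝ, 0 ≤ x → x ≤ y → φ x ≤ φ y := by
    intro x y hx hxy
    by_contra h
    push_neg at h
    have h1 := hr.2.1 (Set.mem_Ici.mpr (hφ.2.2 y (hx.trans hxy)))
      (Set.mem_Ici.mpr (hφ.2.2 x hx)) h
    rw [hφ.2.1 x hx, hφ.2.1 y (hx.trans hxy)] at h1
    linarith
  intro t₁ ht₁ t₂ ht₂ h12
  have huT : Set.uIcc (0:ℝ) T = Set.Icc 0 T := Set.uIcc_of_le hT.le
  have hsubT : ∀ u v : ℝ, 0 ≤ u → u ≤ v → v ≤ T → Set.uIcc u v ⊆ Set.uIcc (0:ℝ) T :=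
    fun u v h1 h2 h3 =>
      Set.uIcc_subset_uIcc (huT ▸ ⟨h1, h2.trans h3⟩) (huT ▸ ⟨h1.trans h2, h3⟩)
  -- generic ratio monotonicity
  have key : ∀ A g : ℝ → ℝ, MonotoneOn A (Set.Icc 0 T) →
      IntervalIntegrable g volume 0 T →
      (∀ s ∈ Set.Icc (0:ℝ) T, g s ≤ (A s - ∫ x in (0:ℝ)..s, g x) / (T - s + ε)) →
      (A t₁ - ∫ x in (0:ℝ)..t₁, g x) / (T - t₁ + ε)
        ≤ (A t₂ - ∫ x in (0:ℝ)..t₂, g x) / (T - t₂ + ε) := by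
    intro A g hA_mono hg_int hg_le
    set F : ℝ → ℝ := fun t => A t - ∫ x in (0:ℝ)..t, g x with hF_def
    have hsub12 : Set.uIcc t₁ t₂ ⊆ Set.uIcc (0:ℝ) T := hsubT t₁ t₂ ht₁.1 h12 ht₂.2
    have hg_int' : IntervalIntegrable g volume t₁ t₂ := hg_int.mono_set hsub12
    have hprim_cont : ContinuousOn (fun t => ∫ x in (0:ℝ)..t, g x) (Set.uIcc (0:ℝ) T) :=
      intervalIntegral.continuousOn_primitive_interval' hg_int Set.left_mem_uIcc
    have hF_int : IntervalIntegrable F volume t₁ t₂ := by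
      apply IntervalIntegrable.sub
      · have : MonotoneOn A (Set.uIcc t₁ t₂) := by
          apply hA_mono.mono
          intro x hx
          exact huT ▸ hsub12 hx
        exact this.intervalIntegrable
      · exact ((hprim_cont.mono hsub12)).intervalIntegrable
    apply gronwall_ratio T ε t₁ t₂ hε h12 ht₂.2 F g hg_int' hF_int
    · intro u v h1 h2 h3
      have hu : u ∈ Set.Icc (0:ℝ) T := ⟨ht₁.1.trans h1, (h2.trans h3).trans ht₂.2⟩
      have hv : v ∈ Set.Icc (0:ℝ) T := ⟨hu.1.trans h2, h3.trans ht₂.2⟩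
      have hAB : A u ≤ A v := hA_mono hu hv h2
      have hadd : (∫ x in (0:ℝ)..u, g x) + ∫ x in u..v, g x = ∫ x in (0:ℝ)..v, g x :=
        intervalIntegral.integral_add_adjacent_intervals
          (hg_int.mono_set (hsubT 0 u le_rfl hu.1 hu.2))
          (hg_int.mono_set (hsubT u v hu.1 h2 hv.2))
      simp only [hF_def]
      linarith
    · intro s hs
      exact hg_le s ⟨ht₁.1.trans hs.1, hs.2.trans ht₂.2⟩
  -- pointwise bounds from the policy
  have hQ1_nonneg : ∀ s ∈ Set.Icc (0:ℝ) T,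
      0 ≤ (B s - ∫ x in (0:ℝ)..s, r (p x)) / (T - s + ε) := fun s hs =>
    div_nonneg (h_data_nonneg s hs) (hd s hs).le
  have hQ2_nonneg : ∀ s ∈ Set.Icc (0:ℝ) T,
      0 ≤ (E s - ∫ x in (0:ℝ)..s, p x) / (T - s + ε) := fun s hs =>
    div_nonneg (h_energy_nonneg s hs) (hd s hs).le
  have hbound1 : ∀ s ∈ Set.Icc (0:ℝ) T,
      r (p s) ≤ (B s - ∫ x in (0:ℝ)..s, r (p x)) / (T - s + ε) := by
    intro s hs
    have hQ := hQ1_nonneg s hs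
    have hps : p s ≤ φ ((B s - ∫ x in (0:ℝ)..s, r (p x)) / (T - s + ε)) := by
      rw [h_policy s hs]; exact min_le_left _ _
    have := (hr.2.1.monotoneOn) (Set.mem_Ici.mpr (hp_nonneg s hs))
      (Set.mem_Ici.mpr (hφ.2.2 _ hQ)) hps
    rwa [hφ.2.1 _ hQ] at this
  have hbound2 : ∀ s ∈ Set.Icc (0:ℝ) T,
      p s ≤ (E s - ∫ x in (0:ℝ)..s, p x) / (T - s + ε) := by
    intro s hs
    rw [h_policy s hs]; exact min_le_right _ _
  have hQ1 := key B (fun s => r (p s)) hB_mono hrp_int hbound1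
  have hQ2 := key E p hE_mono hp_int hbound2
  rw [h_policy t₁ ht₁, h_policy t₂ ht₂]
  exact min_le_min (hφ_mono _ _ (hQ1_nonneg t₁ ht₁) hQ1) hQ2
end
end

section
/- Let T > 0, let E : [0,T] → [0,∞) be nondecreasing, bounded, and continuous at T, and let t_n ∈ [0,T). For each ε > 0 let p_ε : [0,T] → [0,∞) be an integrable function with ∫₀ᵗ p_ε(s) ds ≤ E(t) for all t ∈ [0,T], and satisfying p_ε(t) = (E(t) − ∫₀ᵗ p_ε(s) ds) / (T − t + ε) for all t ∈ (t_n, T) (the online relay policy is energy-limited on the final segment). Then lim_{ε→0⁺} ∫₀ᵀ p_ε(t) dt = E(T); i.e., in the limit ε → 0 the online algorithm consumes all the harvested energy by the deadline. -/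
open MeasureTheory Set Filter intervalIntegral

noncomputable section

/-- Energy branch of Lemma 4.2: if the online relay policy is energy-limited on
the final segment `(t_n, T)`, then in the limit `ε → 0⁺` the online algorithm
consumes all the harvested energy by the deadline. -/
theorem online_relay_consumes_all_energy
    (T : ℝ) (hT : 0 < T)
    (E : ℝ → ℝ)
    (hE_nonneg : ∀ t ∈ Set.Icc (0:ℝ) T, 0 ≤ E t)
    (hE_mono : MonotoneOn E (Set.Icc 0 T))
    (hE_bdd : ∃ M : ℝ, ∀ t ∈ Set.Icc (0:ℝ) T, E t ≤ M)
    (hE_contT : ContinuousWithinAt E (Set.Icc 0 T) T)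
    (tn : ℝ) (htn : tn ∈ Set.Ico (0:ℝ) T)
    -- for each `ε > 0`, the online transmitted power curve `p ε`
    (p : ℝ → ℝ → ℝ)
    (hp_int : ∀ ε : ℝ, 0 < ε → IntervalIntegrable (p ε) MeasureTheory.volume 0 T)
    (hp_nonneg : ∀ ε : ℝ, 0 < ε → ∀ t ∈ Set.Icc (0:ℝ) T, 0 ≤ p ε t)
    -- energy causality
    (hp_causal : ∀ ε : ℝ, 0 < ε → ∀ t ∈ Set.Icc (0:ℝ) T,
      (∫ s in (0:ℝ)..t, p ε s) ≤ E t)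
    -- the policy is energy-limited on the final segment
    (hp_policy : ∀ ε : ℝ, 0 < ε → ∀ t ∈ Set.Ioo tn T,
      p ε t = (E t - ∫ s in (0:ℝ)..t, p ε s) / (T - t + ε)) :
    Filter.Tendsto (fun ε : ℝ => ∫ t in (0:ℝ)..T, p ε t)
      (nhdsWithin 0 (Set.Ioi 0)) (nhds (E T)) := by
  obtain ⟨M₀, hM₀⟩ := hE_bdd
  set M : ℝ := max M₀ 0 with hMdef
  have hM_nonneg : (0:ℝ) ≤ M := le_max_right _ _
  have hET_le : E T ≤ M := (hM₀ T ⟨hT.le, le_refl T⟩).trans (le_max_left _ _)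
  rw [Metric.tendsto_nhds]
  intro δ' hδ'
  set δ : ℝ := δ' / 2 with hδdef
  have hδ : 0 < δ := by positivity
  -- choose `a ∈ (tn, T)` with `E T - δ < E a`
  have hIooSub : Set.Ioo tn T ⊆ Set.Icc 0 T := fun x hx => ⟨htn.1.trans hx.1.le, hx.2.le⟩
  have hTcl : T ∈ closure (Set.Ioo tn T) := by
    rw [closure_Ioo (ne_of_lt htn.2)]
    exact ⟨htn.2.le, le_refl T⟩
  have hnebot : (nhdsWithin T (Set.Ioo tn T)).NeBot :=
    mem_closure_iff_nhdsWithin_neBot.mp hTcl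
  have htends : Filter.Tendsto E (nhdsWithin T (Set.Ioo tn T)) (nhds (E T)) :=
    hE_contT.mono_left (nhdsWithin_mono T hIooSub)
  have hex : ∃ a, a ∈ Set.Ioo tn T ∧ E T - δ < E a := by
    have h1 : ∀ᶠ x in nhdsWithin T (Set.Ioo tn T), E T - δ < E x :=
      htends.eventually (eventually_gt_nhds (by linarith))
    have h2 : ∀ᶠ x in nhdsWithin T (Set.Ioo tn T), x ∈ Set.Ioo tn T :=
      self_mem_nhdsWithin
    exact (h2.and h1).exists
  obtain ⟨a, haIoo, haE⟩ := hex
  have ha0 : 0 ≤ a := htn.1.trans haIoo.1.le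
  have haT : a < T := haIoo.2
  -- the logarithmic factor tends to infinity
  have hLtends : Filter.Tendsto (fun ε : ℝ => Real.log ((T - a + ε) / ε))
      (nhdsWithin 0 (Set.Ioi 0)) Filter.atTop := by
    have h1 : Filter.Tendsto (fun ε : ℝ => (T - a + ε) / ε)
        (nhdsWithin 0 (Set.Ioi 0)) Filter.atTop := by
      have h2 : Filter.Tendsto (fun ε : ℝ => (T - a) * ε⁻¹)
          (nhdsWithin 0 (Set.Ioi 0)) Filter.atTop :=
        Filter.Tendsto.const_mul_atTop (by linarith) tendsto_inv_nhdsGT_zero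
      have h3 : Filter.Tendsto (fun ε : ℝ => (T - a) * ε⁻¹ + 1)
          (nhdsWithin 0 (Set.Ioi 0)) Filter.atTop :=
        Filter.tendsto_atTop_add_const_right _ 1 h2
      refine h3.congr' ?_
      filter_upwards [self_mem_nhdsWithin] with ε (hε : 0 < ε)
      field_simp
    exact Real.tendsto_log_atTop.comp h1
  have hLbig : ∀ᶠ ε in nhdsWithin 0 (Set.Ioi (0:ℝ)),
      M / δ < Real.log ((T - a + ε) / ε) ∧ 0 < Real.log ((T - a + ε) / ε) :=
    (hLtends.eventually_gt_atTop (M / δ)).and (hLtends.eventually_gt_atTop 0)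
  filter_upwards [self_mem_nhdsWithin, hLbig] with ε hεmem hL
  have hε : (0:ℝ) < ε := hεmem
  set L : ℝ := Real.log ((T - a + ε) / ε) with hLdef
  set F : ℝ → ℝ := fun t => ∫ s in (0:ℝ)..t, p ε s with hFdef
  have hint : IntervalIntegrable (p ε) volume 0 T := hp_int ε hε
  have hsub : ∀ b c : ℝ, 0 ≤ b → b ≤ T → 0 ≤ c → c ≤ T →
      IntervalIntegrable (p ε) volume b c := by
    intro b c hb hbT hc hcT
    refine hint.mono_set ?_
    rw [Set.uIcc_of_le hT.le]
    exact Set.uIcc_subset_Icc ⟨hb, hbT⟩ ⟨hc, hcT⟩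
  have hF_le_FT : ∀ t ∈ Set.Icc (0:ℝ) T, F t ≤ F T := by
    intro t ht
    have hsplit : F t + (∫ s in t..T, p ε s) = F T :=
      intervalIntegral.integral_add_adjacent_intervals
        (hsub 0 t le_rfl hT.le ht.1 ht.2) (hsub t T ht.1 ht.2 hT.le le_rfl)
    have hpos : 0 ≤ ∫ s in t..T, p ε s := by
      apply intervalIntegral.integral_nonneg ht.2
      intro u hu
      exact hp_nonneg ε hε u ⟨ht.1.trans hu.1, hu.2⟩
    linarith
  have hFa_nonneg : 0 ≤ F a := by
    apply intervalIntegral.integral_nonneg ha0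
    intro u hu
    exact hp_nonneg ε hε u ⟨hu.1, hu.2.trans haT.le⟩
  have hFT_le : F T ≤ E T := hp_causal ε hε T ⟨hT.le, le_refl T⟩
  set c : ℝ := E T - δ - F T with hcdef
  -- the key estimate: `c * L ≤ M`
  have hcL : c * L ≤ M := by
    rcases le_or_gt c 0 with hc | hc
    · exact (mul_nonpos_of_nonpos_of_nonneg hc hL.2.le).trans hM_nonneg
    · -- lower bound on the integral over `[a, T]`
      have hden : ∀ t ∈ Set.Icc a T, 0 < T - t + ε := fun t ht => by
        have := ht.2; linarith
      have hg_cont : ContinuousOn (fun t : ℝ => c / (T - t + ε)) (Set.uIcc a T) := by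
        rw [Set.uIcc_of_le haT.le]
        apply ContinuousOn.div continuousOn_const
        · fun_prop
        · intro t ht; exact (hden t ht).ne'
      have hg_int : IntervalIntegrable (fun t : ℝ => c / (T - t + ε)) volume a T :=
        hg_cont.intervalIntegrable
      have hpairnull : volume ({a, T} : Set ℝ) = 0 :=
        (((Set.finite_singleton T).insert a).countable).measure_zero volume
      have hae : ∀ᵐ t ∂(volume.restrict (Set.Icc a T)), t ∈ Set.Ioo a T := by
        have h2 : ∀ᵐ t ∂(volume.restrict (Set.Icc a T)), t ∉ ({a, T} : Set ℝ) := by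
          refine MeasureTheory.ae_restrict_of_ae ?_
          rw [MeasureTheory.ae_iff]
          exact MeasureTheory.measure_mono_null (fun t ht => not_not.mp ht) hpairnull
        filter_upwards [MeasureTheory.ae_restrict_mem measurableSet_Icc, h2] with t ht hnt
        simp only [Set.mem_insert_iff, Set.mem_singleton_iff, not_or] at hnt
        exact ⟨lt_of_le_of_ne ht.1 (Ne.symm hnt.1), lt_of_le_of_ne ht.2 hnt.2⟩
      have hbound : (fun t : ℝ => c / (T - t + ε))
          ≤ᵐ[volume.restrict (Set.Icc a T)] p ε := by
        filter_upwards [hae] with t ht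
        have htIcc : t ∈ Set.Icc (0:ℝ) T := ⟨ha0.trans ht.1.le, ht.2.le⟩
        have hpol := hp_policy ε hε t ⟨haIoo.1.trans ht.1, ht.2⟩
        rw [hpol]
        have hden' : 0 < T - t + ε := by have := ht.2; linarith
        rw [div_le_div_iff_of_pos_right hden']
        have hEt : E a ≤ E t := hE_mono ⟨ha0, haT.le⟩ htIcc ht.1.le
        have hFt : F t ≤ F T := hF_le_FT t htIcc
        simp only [hcdef, hFdef]
        linarith
      have hmono : (∫ t in a..T, c / (T - t + ε)) ≤ ∫ t in a..T, p ε t :=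
        intervalIntegral.integral_mono_ae_restrict haT.le hg_int
          (hsub a T ha0 haT.le hT.le le_rfl) hbound
      have hcomp : (∫ t in a..T, c / (T - t + ε)) = c * L := by
        have h1 : (∫ t in a..T, c / (T - t + ε))
            = c * ∫ t in a..T, ((T + ε) - t)⁻¹ := by
          rw [← intervalIntegral.integral_const_mul]
          apply intervalIntegral.integral_congr
          intro t _
          show c / (T - t + ε) = c * (T + ε - t)⁻¹
          rw [div_eq_mul_inv, show T - t + ε = T + ε - t from by ring]
        rw [h1, intervalIntegral.integral_comp_sub_left (fun x => x⁻¹) (T + ε),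
          show T + ε - T = ε by ring, show T + ε - a = T - a + ε by ring,
          integral_inv (notMem_uIcc_of_lt hε (by linarith))]
      have hsplit : F a + (∫ t in a..T, p ε t) = F T :=
        intervalIntegral.integral_add_adjacent_intervals
          (hsub 0 a le_rfl hT.le ha0 haT.le) (hsub a T ha0 haT.le hT.le le_rfl)
      calc c * L = ∫ t in a..T, c / (T - t + ε) := hcomp.symm
        _ ≤ ∫ t in a..T, p ε t := hmono
        _ = F T - F a := by linarith
        _ ≤ F T := by linarith
        _ ≤ E T := hFT_le
        _ ≤ M := hET_le
  -- conclude
  have hcsmall : c < δ := by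
    have h1 : c ≤ M / L := (le_div_iff₀ hL.2).2 hcL
    have h2 : M / L < δ := (div_lt_iff₀ hL.2).2 (by
      have := (div_lt_iff₀ hδ).1 hL.1
      linarith)
    linarith
  have hfinal : E T - F T < δ' := by
    simp only [hcdef, hδdef] at hcsmall
    linarith
  rw [Real.dist_eq, abs_sub_comm, abs_of_nonneg (by linarith : (0:ℝ) ≤ E T - F T)]
  exact hfinal
end
end

section
/- Let r : [0,∞) → [0,∞) be continuous, strictly increasing, strictly concave with r(0) = 0 and r(p) → ∞ as p → ∞, so that φ = r⁻¹ : [0,∞) → [0,∞) is continuous, strictly increasing and strictly convex. Let a < b and let B₁, B₂ : [a,b] → ℝ be piecewise continuously differentiable, nondecreasing functions with B₁ convex, B₁(a) = B₂(a), B₁(b) = B₂(b), and B₁(t) > B₂(t) for all t ∈ (a,b). Then ∫ₐᵇ φ(B₁'(t)) dt < ∫ₐᵇ φ(B₂'(t)) dt; i.e., the convex dominating curve transmits the same total data with strictly less energy. -/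
/-!
Let `σ` be a nondecreasing choice of subgradient of `φ` and `w = σ ∘ B₁'`, which is nondecreasing
because `B₁` is convex. The supporting-line inequality `φ (B₁') + w (B₂' - B₁') ≤ φ (B₂')` is strict
wherever `B₂' ≠ B₁'`, a set of positive measure since `B₂ ≠ B₁` inside `(a, b)`. So it suffices that
`∫ w (B₂' - B₁') ≥ 0`, a continuous Abel summation: by the layer-cake formula and Fubini this is
an integral over `s` of `∫ (B₂' - B₁')` over the superlevel sets `{w > s}`, which are terminal
intervals `(c, b)`, and `∫_c^b (B₂' - B₁') = B₁ c - B₂ c ≥ 0`.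
-/

open MeasureTheory Set Filter intervalIntegral

noncomputable section

/-- `f` is piecewise continuously differentiable on `[a,b]` with derivative `f'`:
`f` is continuous, differentiable with derivative `f'` off a finite set, and `f'`
is piecewise continuous and bounded. -/
def PiecewiseC1On (a b : ℝ) (f f' : ℝ → ℝ) : Prop :=
  ContinuousOn f (Set.Icc a b) ∧
  (∃ s : Finset ℝ, (∀ t ∈ Set.Ioo a b, t ∉ s → HasDerivAt f (f' t) t) ∧
    ContinuousOn f' (Set.Icc a b \ (s : Set ℝ))) ∧
  (∃ M : ℝ, ∀ t ∈ Set.Icc a b, |f' t| ≤ M)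

open Topology

theorem aestronglyMeasurable_restrict_of_continuousOn_diff {g : ℝ → ℝ} {S s : Set ℝ}
    (hS : MeasurableSet S) (hs : s.Countable) (hg : ContinuousOn g (S \ s)) :
    AEStronglyMeasurable g (volume.restrict S) := by
  have hnull : volume (S ∩ s) = 0 := measure_mono_null inter_subset_right (hs.measure_zero _)
  rw [← Measure.restrict_congr_set (sdiff_ae_eq_self.2 hnull)]
  exact hg.aestronglyMeasurable (hS.diff hs.measurableSet)

theorem MonotoneOn.nonneg_of_hasDerivAt {f : ℝ → ℝ} {s : Set ℝ} {x f' : ℝ}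
    (hf : MonotoneOn f s) (hs : s ∈ 𝓝 x) (hd : HasDerivAt f f' x) : 0 ≤ f' := by
  rw [← hd.hasDerivWithinAt.derivWithin (uniqueDiffWithinAt_of_mem_nhds hs)]
  exact hf.derivWithin_nonneg

theorem exists_ae_eq_Ioo_of_forall_Ioo_subset {U : Set ℝ} {a b : ℝ} (hab : a ≤ b)
    (hU : U ⊆ Ioo a b) (hup : ∀ t ∈ U, Ioo t b ⊆ U) : ∃ c ∈ Icc a b, U =ᵐ[volume] Ioo c b := by
  rcases U.eq_empty_or_nonempty with rfl | hne
  · exact ⟨b, ⟨hab, le_rfl⟩, by simp⟩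
  have hbdd : BddBelow U := ⟨a, fun t ht => (hU ht).1.le⟩
  have hc : sInf U ∈ Icc a b :=
    ⟨le_csInf hne fun t ht => (hU ht).1.le,
      (csInf_le hbdd hne.some_mem).trans (hU hne.some_mem).2.le⟩
  refine ⟨sInf U, hc, (ae_eq_of_subset_of_measure_ge ?_ ?_
    measurableSet_Ioo.nullMeasurableSet ?_).symm⟩
  · intro t' ht'
    obtain ⟨t, ht, htt'⟩ := (csInf_lt_iff hbdd hne).1 ht'.1
    exact hup t ht ⟨htt', ht'.2⟩
  · calc volume U ≤ volume (Icc (sInf U) b) :=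
          measure_mono fun t ht => ⟨csInf_le hbdd ht, (hU ht).2.le⟩
      _ = volume (Ioo (sInf U) b) := by rw [Real.volume_Icc, Real.volume_Ioo]
  · exact ((measure_mono hU).trans_lt measure_Ioo_lt_top).ne

theorem setIntegral_mul_nonneg_of_monotoneOn {a b K : ℝ} {w g : ℝ → ℝ} (hab : a ≤ b)
    (hw : Measurable w) (hw_mono : MonotoneOn w (Ioo a b))
    (hw_mem : ∀ t ∈ Ioo a b, w t ∈ Icc 0 K) (hg : IntegrableOn g (Ioo a b))
    (htail : ∀ c ∈ Icc a b, 0 ≤ ∫ t in c..b, g t) :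
    0 ≤ ∫ t in Ioo a b, w t * g t := by
  -- layer cake: `w t = volume {s ∈ (0, K) | s < w t}`
  set F : ℝ → ℝ → ℝ := fun t s => if s < w t then g t else 0
  have hF_int : Integrable (Function.uncurry F)
      ((volume.restrict (Ioo a b)).prod (volume.restrict (Ioo 0 K))) := by
    have hF : Function.uncurry F = {p : ℝ × ℝ | p.2 < w p.1}.indicator (fun p => g p.1) := by
      ext ⟨t, s⟩; simp [F, indicator_apply]
    refine Integrable.mono' (hg.norm.mul_prod (integrable_const (1 : ℝ))) ?_ ?_
    · rw [hF]
      exact hg.aestronglyMeasurable.comp_fst.indicator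
        (measurableSet_lt measurable_snd (hw.comp measurable_fst))
    · refine Eventually.of_forall fun ⟨t, s⟩ => ?_
      simp only [Function.uncurry_apply_pair, F, mul_one]
      split_ifs <;> simp
  have hinner_t : ∀ᵐ t ∂volume.restrict (Ioo a b), ∫ s in Ioo 0 K, F t s = w t * g t := by
    filter_upwards [ae_restrict_mem measurableSet_Ioo] with t ht
    have hF : F t = (Iio (w t)).indicator fun _ => g t := by
      ext s; simp [F, indicator_apply]
    rw [hF, MeasureTheory.integral_indicator measurableSet_Iio,
      Measure.restrict_restrict measurableSet_Iio, setIntegral_const, Iio_inter_Ioo,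
      min_eq_left (hw_mem t ht).2, Real.volume_real_Ioo_of_le (hw_mem t ht).1, sub_zero,
      smul_eq_mul]
  have hinner_s : ∀ s, 0 ≤ ∫ t in Ioo a b, F t s := by
    intro s
    have hmeas : MeasurableSet {t | s < w t} := measurableSet_lt measurable_const hw
    obtain ⟨c, hc, hU⟩ := exists_ae_eq_Ioo_of_forall_Ioo_subset hab
      (U := {t | s < w t} ∩ Ioo a b) inter_subset_right fun t ht t' ht' =>
        ⟨ht.1.trans_le (hw_mono ht.2 ⟨ht.2.1.trans ht'.1, ht'.2⟩ ht'.1.le),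
          ht.2.1.trans ht'.1, ht'.2⟩
    have hF : (fun t => F t s) = {t | s < w t}.indicator g := by
      ext t; simp [F, indicator_apply]
    rw [hF, MeasureTheory.integral_indicator hmeas, Measure.restrict_restrict hmeas,
      setIntegral_congr_set hU, ← integral_Ioc_eq_integral_Ioo, ← integral_of_le hc.2]
    exact htail c hc
  calc 0 ≤ ∫ s in Ioo 0 K, ∫ t in Ioo a b, F t s := integral_nonneg hinner_s
    _ = ∫ t in Ioo a b, ∫ s in Ioo 0 K, F t s := (integral_integral_swap hF_int).symm
    _ = ∫ t in Ioo a b, w t * g t := integral_congr_ae hinner_t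

namespace MeasureTheory

theorem integral_lt_integral_of_ae_le_of_measure_setOf_lt_ne_zero {α : Type*}
    [MeasurableSpace α] {μ : Measure α} {f g : α → ℝ} (hf : Integrable f μ) (hg : Integrable g μ)
    (hle : f ≤ᵐ[μ] g) (hlt : μ {x | f x < g x} ≠ 0) : ∫ x, f x ∂μ < ∫ x, g x ∂μ := by
  rw [← sub_pos, ← integral_sub hg hf, integral_pos_iff_support_of_nonneg_ae
    (hle.mono fun x => sub_nonneg.2) (hg.sub hf)]
  exact pos_iff_ne_zero.2 (mt (measure_mono_null fun x hx => (sub_pos.2 hx).ne') hlt)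

end MeasureTheory

/-- A monotone choice of subgradient of `φ` on `[0, ∞)`: at `0`, where `φ` need not be
right-differentiable, any nondecreasing `φ` has `0` as a subgradient. -/
def rightDerivOnPos (φ : ℝ → ℝ) (x : ℝ) : ℝ :=
  if 0 < x then derivWithin φ (Ioi x) x else 0

theorem measurable_rightDerivOnPos (φ : ℝ → ℝ) : Measurable (rightDerivOnPos φ) :=
  Measurable.ite measurableSet_Ioi (measurable_derivWithin_Ioi φ) measurable_const

section rightDerivOnPos

variable {φ : ℝ → ℝ}

theorem rightDerivOnPos_nonneg (hφ : MonotoneOn φ (Ici 0)) (x : ℝ) :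
    0 ≤ rightDerivOnPos φ x := by
  unfold rightDerivOnPos
  split_ifs with hx
  · exact (hφ.mono fun y hy => (hx.trans hy).le).derivWithin_nonneg
  · exact le_rfl

theorem monotone_rightDerivOnPos (hφm : MonotoneOn φ (Ici 0)) (hφc : ConvexOn ℝ (Ici 0) φ) :
    Monotone (rightDerivOnPos φ) := by
  intro x y hxy
  by_cases hx : 0 < x
  · have hy : 0 < y := hx.trans_le hxy
    simp only [rightDerivOnPos, hx, hy, if_true]
    exact hφc.monotoneOn_rightDeriv (by rwa [interior_Ici]) (by rwa [interior_Ici]) hxy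
  · simp only [rightDerivOnPos, hx, if_false]
    exact rightDerivOnPos_nonneg hφm y

theorem add_rightDerivOnPos_mul_lt (hφm : StrictMonoOn φ (Ici 0))
    (hφc : StrictConvexOn ℝ (Ici 0) φ) {x y : ℝ} (hx : 0 ≤ x) (hy : 0 ≤ y) (hxy : x ≠ y) :
    φ x + rightDerivOnPos φ x * (y - x) < φ y := by
  rcases hx.eq_or_lt with rfl | hx
  · simp only [rightDerivOnPos, lt_irrefl, if_false, zero_mul, add_zero]
    exact hφm self_mem_Ici hy (hy.lt_of_ne hxy)
  have hxi : x ∈ interior (Ici 0) := by rwa [interior_Ici]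
  simp only [rightDerivOnPos, hx, if_true]
  rcases hxy.lt_or_gt with hxy | hyx
  · have := hφc.rightDeriv_lt_slope hx.le hy hxy
      (hφc.convexOn.differentiableWithinAt_Ioi_of_mem_interior hxi)
    rw [slope_def_field, lt_div_iff₀ (sub_pos.2 hxy)] at this
    linarith
  · have := (hφc.slope_lt_leftDeriv hy hx.le hyx
      (hφc.convexOn.differentiableWithinAt_Iio_of_mem_interior hxi)).trans_le
      (hφc.convexOn.leftDeriv_le_rightDeriv_of_mem_interior hxi)
    rw [slope_def_field, div_lt_iff₀ (sub_pos.2 hyx)] at this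
    linarith

theorem integral_comp_lt_integral_comp_of_rightDerivOnPos {α : Type*} [MeasurableSpace α]
    {μ : Measure α} (hφm : StrictMonoOn φ (Ici 0)) (hφc : StrictConvexOn ℝ (Ici 0) φ)
    {x y W : α → ℝ} {K : ℝ} (hφx : Integrable (fun t => φ (x t)) μ)
    (hφy : Integrable (fun t => φ (y t)) μ) (hyx : Integrable (fun t => y t - x t) μ)
    (hW : AEStronglyMeasurable W μ) (hWK : ∀ᵐ t ∂μ, ‖W t‖ ≤ K)
    (hxy : ∀ᵐ t ∂μ, 0 ≤ x t ∧ 0 ≤ y t ∧ W t = rightDerivOnPos φ (x t))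
    (hne : ¬ x =ᵐ[μ] y) (hgap : 0 ≤ ∫ t, W t * (y t - x t) ∂μ) :
    ∫ t, φ (x t) ∂μ < ∫ t, φ (y t) ∂μ := by
  have hWyx : Integrable (fun t => W t * (y t - x t)) μ := hyx.bdd_mul hW hWK
  have hle : ∀ᵐ t ∂μ, φ (x t) + W t * (y t - x t) ≤ φ (y t) := by
    filter_upwards [hxy] with t ⟨hx, hy, hWt⟩
    rcases eq_or_ne (x t) (y t) with heq | hne
    · simp [heq]
    · exact hWt ▸ (add_rightDerivOnPos_mul_lt hφm hφc hx hy hne).le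
  have hlt : μ {t | φ (x t) + W t * (y t - x t) < φ (y t)} ≠ 0 := fun h0 => hne <| by
    filter_upwards [hxy, measure_eq_zero_iff_ae_notMem.1 h0] with t ⟨hx, hy, hWt⟩ ht
    by_contra hne
    exact ht (hWt ▸ add_rightDerivOnPos_mul_lt hφm hφc hx hy hne)
  calc ∫ t, φ (x t) ∂μ ≤ ∫ t, φ (x t) ∂μ + ∫ t, W t * (y t - x t) ∂μ :=
        le_add_of_nonneg_right hgap
    _ = ∫ t, φ (x t) + W t * (y t - x t) ∂μ := (integral_add hφx hWyx).symm
    _ < ∫ t, φ (y t) ∂μ :=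
        integral_lt_integral_of_ae_le_of_measure_setOf_lt_ne_zero (hφx.add hWyx) hφy hle hlt

end rightDerivOnPos

namespace PiecewiseC1On

variable {a b : ℝ} {f f' g g' : ℝ → ℝ}

theorem sub (hf : PiecewiseC1On a b f f') (hg : PiecewiseC1On a b g g') :
    PiecewiseC1On a b (fun t => f t - g t) (fun t => f' t - g' t) := by
  obtain ⟨hfc, ⟨s, hfd, hfc'⟩, M, hM⟩ := hf
  obtain ⟨hgc, ⟨s', hgd, hgc'⟩, M', hM'⟩ := hg
  refine ⟨hfc.sub hgc, ⟨s ∪ s', fun t ht hts => ?_, ?_⟩, M + M', fun t ht => ?_⟩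
  · rw [Finset.mem_union, not_or] at hts
    exact (hfd t ht hts.1).sub (hgd t ht hts.2)
  · rw [Finset.coe_union, ← sdiff_sdiff]
    exact (hfc'.mono sdiff_subset).sub (hgc'.mono (sdiff_subset_sdiff_left sdiff_subset))
  · exact (abs_sub _ _).trans (add_le_add (hM t ht) (hM' t ht))

theorem ae_hasDerivAt (h : PiecewiseC1On a b f f') :
    ∀ᵐ t ∂volume.restrict (Ioo a b), HasDerivAt f (f' t) t := by
  obtain ⟨-, ⟨s, hd, -⟩, -⟩ := h
  filter_upwards [ae_restrict_mem measurableSet_Ioo,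
    ae_restrict_of_ae (s.finite_toSet.countable.ae_notMem volume)] with t ht hts
  exact hd t ht hts

theorem ae_nonneg (h : PiecewiseC1On a b f f') (hf : MonotoneOn f (Icc a b)) :
    ∀ᵐ t ∂volume.restrict (Ioo a b), 0 ≤ f' t := by
  filter_upwards [ae_restrict_mem measurableSet_Ioo, h.ae_hasDerivAt] with t ht hd
  exact hf.nonneg_of_hasDerivAt (Icc_mem_nhds ht.1 ht.2) hd

theorem ae_rightDeriv_eq (h : PiecewiseC1On a b f f') :
    ∀ᵐ t ∂volume.restrict (Ioo a b), derivWithin f (Ioi t) t = f' t :=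
  h.ae_hasDerivAt.mono fun t hd => hd.hasDerivWithinAt.derivWithin (uniqueDiffWithinAt_Ioi t)

theorem integrableOn (h : PiecewiseC1On a b f f') : IntegrableOn f' (Ioo a b) := by
  obtain ⟨-, ⟨s, -, hc⟩, M, hM⟩ := h
  refine IntegrableOn.of_bound measure_Ioo_lt_top
    (aestronglyMeasurable_restrict_of_continuousOn_diff measurableSet_Ioo
      s.finite_toSet.countable (hc.mono (sdiff_subset_sdiff_left Ioo_subset_Icc_self))) M ?_
  filter_upwards [ae_restrict_mem measurableSet_Ioo] with t ht
  exact hM t (Ioo_subset_Icc_self ht)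

theorem integrableOn_comp {φ : ℝ → ℝ} (h : PiecewiseC1On a b f f')
    (hf : MonotoneOn f (Icc a b)) (hφc : ContinuousOn φ (Ici 0)) (hφm : MonotoneOn φ (Ici 0)) :
    IntegrableOn (fun t => φ (f' t)) (Ioo a b) := by
  obtain ⟨-, ⟨s, hd, hc⟩, M, hM⟩ := h
  have hpos : ∀ t ∈ Ioo a b \ s, 0 ≤ f' t := fun t ht =>
    hf.nonneg_of_hasDerivAt (Icc_mem_nhds ht.1.1 ht.1.2) (hd t ht.1 ht.2)
  refine IntegrableOn.of_bound measure_Ioo_lt_top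
    (aestronglyMeasurable_restrict_of_continuousOn_diff measurableSet_Ioo
      s.finite_toSet.countable (hφc.comp
        (hc.mono (sdiff_subset_sdiff_left Ioo_subset_Icc_self)) hpos)) (max |φ 0| |φ M|) ?_
  filter_upwards [ae_restrict_mem measurableSet_Ioo,
    ae_restrict_of_ae (s.finite_toSet.countable.ae_notMem volume)] with t ht hts
  have h0 := hpos t ⟨ht, hts⟩
  have hle : f' t ≤ M := (le_abs_self _).trans (hM t (Ioo_subset_Icc_self ht))
  exact abs_le_max_abs_abs (hφm self_mem_Ici h0 h0) (hφm h0 (h0.trans hle) hle)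

theorem intervalIntegrable (h : PiecewiseC1On a b f f') {c d : ℝ} (hac : a ≤ c) (hcd : c ≤ d)
    (hdb : d ≤ b) : IntervalIntegrable f' volume c d :=
  (intervalIntegrable_iff_integrableOn_Ioo_of_le hcd).2
    (h.integrableOn.mono_set (Ioo_subset_Ioo hac hdb))

theorem integral_eq_sub (h : PiecewiseC1On a b f f') {c d : ℝ} (hac : a ≤ c) (hcd : c ≤ d)
    (hdb : d ≤ b) : ∫ t in c..d, f' t = f d - f c := by
  obtain ⟨s, hd, -⟩ := h.2.1
  exact integral_eq_of_hasDerivAt_off_countable_of_le f f' hcd s.finite_toSet.countable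
    (h.1.mono (Icc_subset_Icc hac hdb))
    (fun t ht => hd t (Ioo_subset_Ioo hac hdb ht.1) ht.2) (h.intervalIntegrable hac hcd hdb)

theorem sub_eq_of_ae_eq (hf : PiecewiseC1On a b f f') (hg : PiecewiseC1On a b g g')
    (heq : f' =ᵐ[volume.restrict (Ioo a b)] g') {c : ℝ} (hc : c ∈ Icc a b) :
    f c - f a = g c - g a := by
  rw [← hf.integral_eq_sub le_rfl hc.1 hc.2, ← hg.integral_eq_sub le_rfl hc.1 hc.2,
    integral_of_le hc.1, integral_of_le hc.1, integral_Ioc_eq_integral_Ioo,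
    integral_Ioc_eq_integral_Ioo]
  exact integral_congr_ae (ae_restrict_of_ae_restrict_of_subset (Ioo_subset_Ioo_right hc.2) heq)

theorem bddAbove_rightDeriv (h : PiecewiseC1On a b f f') (hc : ConvexOn ℝ (Icc a b) f) :
    BddAbove ((fun t => derivWithin f (Ioi t) t) '' Ioo a b) := by
  obtain ⟨-, ⟨s, hd, -⟩, M, hM⟩ := h
  refine ⟨M, ?_⟩
  rintro _ ⟨t, ht, rfl⟩
  obtain ⟨t', ht', ht's⟩ := ((Ioo_infinite ht.2).sdiff s.finite_toSet).nonempty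
  have ht'ab : t' ∈ Ioo a b := ⟨ht.1.trans ht'.1, ht'.2⟩
  calc derivWithin f (Ioi t) t ≤ derivWithin f (Ioi t') t' :=
        hc.monotoneOn_rightDeriv (by rwa [interior_Icc]) (by rwa [interior_Icc]) ht'.1.le
    _ = f' t' := (hd t' ht'ab ht's).hasDerivWithinAt.derivWithin (uniqueDiffWithinAt_Ioi t')
    _ ≤ M := (le_abs_self _).trans (hM t' (Ioo_subset_Icc_self ht'ab))

end PiecewiseC1On

theorem convex_dominating_curve_strictly_less_energy_general
    (φ : ℝ → ℝ)
    (hφ_cont : ContinuousOn φ (Set.Ici 0))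
    (hφ_mono : StrictMonoOn φ (Set.Ici 0))
    (hφ_convex : StrictConvexOn ℝ (Set.Ici 0) φ)
    (a b : ℝ) (hab : a < b)
    (B₁ B₁' B₂ B₂' : ℝ → ℝ)
    (hB₁_pc1 : PiecewiseC1On a b B₁ B₁') (hB₂_pc1 : PiecewiseC1On a b B₂ B₂')
    (hB₁_mono : MonotoneOn B₁ (Set.Icc a b)) (hB₂_mono : MonotoneOn B₂ (Set.Icc a b))
    (hB₁_convex : ConvexOn ℝ (Set.Icc a b) B₁)
    (h_start : B₁ a = B₂ a) (h_end : B₁ b = B₂ b)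
    (h_gt : ∀ t ∈ Set.Ioo a b, B₂ t < B₁ t) :
    (∫ t in a..b, φ (B₁' t)) < ∫ t in a..b, φ (B₂' t) := by
  have hφm := hφ_mono.monotoneOn
  have hσ := monotone_rightDerivOnPos hφm hφ_convex.convexOn
  have hD := hB₂_pc1.sub hB₁_pc1
  obtain ⟨R, hR⟩ := hB₁_pc1.bddAbove_rightDeriv hB₁_convex
  set w : ℝ → ℝ := fun t => rightDerivOnPos φ (derivWithin B₁ (Ioi t) t)
  have hw_meas : Measurable w :=
    (measurable_rightDerivOnPos φ).comp (measurable_derivWithin_Ioi B₁)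
  have hw_mem : ∀ t ∈ Ioo a b, w t ∈ Icc 0 (rightDerivOnPos φ R) := fun t ht =>
    ⟨rightDerivOnPos_nonneg hφm _, hσ (hR ⟨t, ht, rfl⟩)⟩
  have hgap : 0 ≤ ∫ t in Ioo a b, w t * (B₂' t - B₁' t) := by
    refine setIntegral_mul_nonneg_of_monotoneOn hab.le hw_meas
      (hσ.comp_monotoneOn (interior_Icc (a := a) (b := b) ▸ hB₁_convex.monotoneOn_rightDeriv))
      hw_mem hD.integrableOn fun c hc => ?_
    rw [hD.integral_eq_sub hc.1 hc.2 le_rfl, h_end, sub_self, zero_sub, neg_nonneg, sub_nonpos]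
    rcases eq_endpoints_or_mem_Ioo_of_mem_Icc hc with rfl | rfl | hc'
    exacts [h_start.ge, h_end.ge, (h_gt c hc').le]
  have hne : ¬ B₁' =ᵐ[volume.restrict (Ioo a b)] B₂' := fun heq => by
    have hm : (a + b) / 2 ∈ Ioo a b := ⟨by linarith, by linarith⟩
    linarith [hB₁_pc1.sub_eq_of_ae_eq hB₂_pc1 heq (Ioo_subset_Icc_self hm), h_gt _ hm]
  rw [integral_of_le hab.le, integral_of_le hab.le, integral_Ioc_eq_integral_Ioo,
    integral_Ioc_eq_integral_Ioo]
  refine integral_comp_lt_integral_comp_of_rightDerivOnPos (K := rightDerivOnPos φ R)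
    hφ_mono hφ_convex
    (hB₁_pc1.integrableOn_comp hB₁_mono hφ_cont hφm)
    (hB₂_pc1.integrableOn_comp hB₂_mono hφ_cont hφm) hD.integrableOn
    hw_meas.aestronglyMeasurable ?_ ?_ hne hgap
  · filter_upwards [ae_restrict_mem measurableSet_Ioo] with t ht
    rw [Real.norm_of_nonneg (hw_mem t ht).1]
    exact (hw_mem t ht).2
  · filter_upwards [hB₁_pc1.ae_nonneg hB₁_mono, hB₂_pc1.ae_nonneg hB₂_mono,
      hB₁_pc1.ae_rightDeriv_eq] with t h₁ h₂ hρ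
    exact ⟨h₁, h₂, by simp only [w, hρ]⟩

/-- Lemma A.2 (energy-comparison lemma): if `B₁` is convex, strictly above `B₂`
on `(a,b)` with the same endpoints, then `B₁` uses strictly less energy. -/
theorem convex_dominating_curve_strictly_less_energy
    (r φ : ℝ → ℝ)
    (hr_cont : ContinuousOn r (Set.Ici 0))
    (hr_mono : StrictMonoOn r (Set.Ici 0))
    (hr_concave : StrictConcaveOn ℝ (Set.Ici 0) r)
    (hr_zero : r 0 = 0)
    (hr_top : Filter.Tendsto r Filter.atTop Filter.atTop)
    (hφ : IsInverseOn φ r)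
    (hφ_cont : ContinuousOn φ (Set.Ici 0))
    (hφ_mono : StrictMonoOn φ (Set.Ici 0))
    (hφ_convex : StrictConvexOn ℝ (Set.Ici 0) φ)
    (a b : ℝ) (hab : a < b)
    (B₁ B₁' B₂ B₂' : ℝ → ℝ)
    (hB₁_pc1 : PiecewiseC1On a b B₁ B₁') (hB₂_pc1 : PiecewiseC1On a b B₂ B₂')
    (hB₁_mono : MonotoneOn B₁ (Set.Icc a b)) (hB₂_mono : MonotoneOn B₂ (Set.Icc a b))
    (hB₁_convex : ConvexOn ℝ (Set.Icc a b) B₁)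
    (h_start : B₁ a = B₂ a) (h_end : B₁ b = B₂ b)
    (h_gt : ∀ t ∈ Set.Ioo a b, B₂ t < B₁ t) :
    (∫ t in a..b, φ (B₁' t)) < ∫ t in a..b, φ (B₂' t) :=
  convex_dominating_curve_strictly_less_energy_general φ hφ_cont hφ_mono hφ_convex a b hab B₁ B₁' B₂
    B₂' hB₁_pc1 hB₂_pc1 hB₁_mono hB₂_mono hB₁_convex h_start h_end h_gt
end
end
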